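/- arXiv:1805.05179 — 3 statements merged into one kernel-verified Lean document; each statement's English description precedes it below -/
import Mathlib

section
/- For every natural number α ≥ 1, there exists a constant C such that for all t ≥ 0, ∫₀ᵗ exp(−2(√(1+t) − √(1+s))) (1+s)^{−(1+α)/2} ds ≤ C (1+t)^{−α/2}. -/
/-!
Put `E(s) = exp (2 √(1+s))`. After factoring out `exp (-2 √(1+t))` one must show
`∫₀ᵗ E(s) (1+s)^(-(1+α)/2) ds ≤ C E(t) (1+t)^(-α/2)`. The right-hand side `G(t) = E(t) (1+t)^(-α/2)`
has derivative `G(s) ((1+s)^(-1/2) - α/(2(1+s)))`, which dominates half the integrand once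
`√(1+s) ≥ α`, i.e. for `s ≥ α²`; there the fundamental theorem of calculus does the job.
On the bounded range `[0, α²]` the integrand is at most `E(t)`, and `t ≤ C (1+t)^(-α/2)`.
-/

open Real Set intervalIntegral

noncomputable def expSqrtRpow (p s : ℝ) : ℝ := exp (2 * √(1 + s)) * (1 + s) ^ p

lemma expSqrtRpow_pos (p : ℝ) {s : ℝ} (hs : -1 < s) : 0 < expSqrtRpow p s := by
  unfold expSqrtRpow
  have : 0 < 1 + s := by linarith
  positivity

lemma continuousOn_expSqrtRpow (p : ℝ) : ContinuousOn (expSqrtRpow p) (Ioi (-1)) := by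
  unfold expSqrtRpow
  exact (by fun_prop : Continuous fun s : ℝ => exp (2 * √(1 + s))).continuousOn.mul
    ((continuousOn_const.add continuousOn_id).rpow_const
      fun s (hs : -1 < s) => Or.inl (show 1 + s ≠ 0 by linarith))

lemma hasDerivAt_expSqrtRpow (p : ℝ) {s : ℝ} (hs : -1 < s) :
    HasDerivAt (expSqrtRpow p) (expSqrtRpow p s * (1 / √(1 + s) + p / (1 + s))) s := by
  have h1s : 0 < 1 + s := by linarith
  have hsqrt : HasDerivAt (fun y => √(1 + y)) (1 / (2 * √(1 + s))) s := by
    simpa using ((hasDerivAt_id s).const_add 1).sqrt h1s.ne'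
  have hpow : HasDerivAt (fun y => (1 + y) ^ p) (p * (1 + s) ^ (p - 1)) s := by
    simpa using ((hasDerivAt_id s).const_add 1).rpow_const (p := p) (Or.inl h1s.ne')
  refine (((hsqrt.const_mul 2).exp).mul hpow).congr_deriv ?_
  have : 0 < √(1 + s) := sqrt_pos.2 h1s
  rw [expSqrtRpow, rpow_sub_one h1s.ne']
  field_simp

lemma expSqrtRpow_sub_half (p : ℝ) {s : ℝ} (hs : -1 < s) :
    expSqrtRpow (p - 1 / 2) s = expSqrtRpow p s / √(1 + s) := by
  have h1s : 0 < 1 + s := by linarith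
  rw [expSqrtRpow, expSqrtRpow, rpow_sub h1s, sqrt_eq_rpow, mul_div_assoc]

lemma intervalIntegrable_expSqrtRpow (p : ℝ) {u v : ℝ} (hu : -1 < u) (hv : -1 < v) :
    IntervalIntegrable (expSqrtRpow p) MeasureTheory.volume u v :=
  ((continuousOn_expSqrtRpow p).mono fun _ hs => (lt_min hu hv).trans_le hs.1).intervalIntegrable

lemma integral_expSqrtRpow_le {p t : ℝ} (hp : p ≤ 0) (ht : 0 ≤ t) :
    ∫ s in (0 : ℝ)..t, expSqrtRpow p s ≤ t * exp (2 * √(1 + t)) := by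
  have hbound : ∀ s ∈ Icc 0 t, expSqrtRpow p s ≤ exp (2 * √(1 + t)) := by
    rintro s ⟨hs0, hst⟩
    have hpow : (1 + s) ^ p ≤ 1 := rpow_le_one_of_one_le_of_nonpos (by linarith) hp
    have hexp : exp (2 * √(1 + s)) ≤ exp (2 * √(1 + t)) := by gcongr
    calc expSqrtRpow p s ≤ exp (2 * √(1 + s)) * 1 := by unfold expSqrtRpow; gcongr
      _ ≤ exp (2 * √(1 + t)) := by simpa using hexp
  simpa using integral_mono_on ht
    (intervalIntegrable_expSqrtRpow p (by norm_num) (by linarith)) intervalIntegrable_const hbound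

lemma expSqrtRpow_le_mul_deriv {a C s : ℝ} (hC : 2 ≤ C) (hs : -1 < s) (has : a ≤ √(1 + s)) :
    expSqrtRpow (-(1 + a) / 2) s ≤
      C * (expSqrtRpow (-a / 2) s * (1 / √(1 + s) + -a / 2 / (1 + s))) := by
  have h1s : 0 < 1 + s := by linarith
  have hx : 0 < √(1 + s) := sqrt_pos.2 h1s
  have hG := expSqrtRpow_pos (-a / 2) hs
  rw [show -(1 + a) / 2 = -a / 2 - 1 / 2 by ring, expSqrtRpow_sub_half _ hs]
  have hsq : 1 + s = √(1 + s) ^ 2 := (sq_sqrt h1s.le).symm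
  set x := √(1 + s)
  set G := expSqrtRpow (-a / 2) s
  rw [hsq]
  have hhalf : 1 / (2 * x) ≤ 1 / x + -a / 2 / x ^ 2 := by
    rw [div_add_div _ _ hx.ne' (by positivity), div_le_div_iff₀ (by positivity) (by positivity)]
    nlinarith
  calc G / x = 2 * (G * (1 / (2 * x))) := by field_simp
    _ ≤ C * (G * (1 / x + -a / 2 / x ^ 2)) := by gcongr

lemma integral_expSqrtRpow_le_sub {a C t₀ t : ℝ} (hC : 2 ≤ C) (ht₀ : a ^ 2 ≤ t₀) (ht : t₀ ≤ t) :
    ∫ s in t₀..t, expSqrtRpow (-(1 + a) / 2) s ≤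
      C * expSqrtRpow (-a / 2) t - C * expSqrtRpow (-a / 2) t₀ := by
  have hIcc : Icc t₀ t ⊆ Ioi (-1) := fun s hs =>
    show -1 < s by linarith [hs.1, sq_nonneg a]
  refine integral_le_sub_of_hasDeriv_right_of_le (g := fun s => C * expSqrtRpow (-a / 2) s) ht
    (continuousOn_const.mul ((continuousOn_expSqrtRpow _).mono hIcc))
    (fun s hs =>
      ((hasDerivAt_expSqrtRpow _ (hIcc (Ioo_subset_Icc_self hs))).const_mul C).hasDerivWithinAt)
    ((continuousOn_expSqrtRpow _).mono hIcc).integrableOn_Icc fun s hs => ?_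
  refine expSqrtRpow_le_mul_deriv hC (hIcc (Ioo_subset_Icc_self hs)) ?_
  calc a ≤ |a| := le_abs_self a
    _ = √(a ^ 2) := (sqrt_sq_eq_abs a).symm
    _ ≤ √(1 + s) := sqrt_le_sqrt (by linarith [hs.1])

lemma le_mul_one_add_rpow_neg {a t : ℝ} (ha : 0 ≤ a) (ht : 0 ≤ t) (hta : t ≤ a ^ 2) :
    t ≤ (2 + a ^ 2 * (1 + a ^ 2) ^ (a / 2)) * (1 + t) ^ (-a / 2) := by
  have h1t : 0 < 1 + t := by linarith
  rw [neg_div, rpow_neg h1t.le, ← div_eq_mul_inv, le_div_iff₀ (by positivity)]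
  have : t * (1 + t) ^ (a / 2) ≤ a ^ 2 * (1 + a ^ 2) ^ (a / 2) := by
    gcongr
  linarith

theorem integral_expSqrtRpow_le_mul {a t : ℝ} (ha : 0 ≤ a) (ht : 0 ≤ t) :
    ∫ s in (0 : ℝ)..t, expSqrtRpow (-(1 + a) / 2) s ≤
      (2 + a ^ 2 * (1 + a ^ 2) ^ (a / 2)) * expSqrtRpow (-a / 2) t := by
  set C := 2 + a ^ 2 * (1 + a ^ 2) ^ (a / 2)
  have hC : 2 ≤ C := le_add_of_nonneg_right (by positivity)
  have hp : -(1 + a) / 2 ≤ 0 := by linarith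
  have small : ∀ t, 0 ≤ t → t ≤ a ^ 2 →
      ∫ s in (0 : ℝ)..t, expSqrtRpow (-(1 + a) / 2) s ≤ C * expSqrtRpow (-a / 2) t := by
    intro t ht hta
    calc ∫ s in (0 : ℝ)..t, expSqrtRpow (-(1 + a) / 2) s ≤ t * exp (2 * √(1 + t)) :=
          integral_expSqrtRpow_le hp ht
      _ ≤ C * (1 + t) ^ (-a / 2) * exp (2 * √(1 + t)) := by
          gcongr; exact le_mul_one_add_rpow_neg ha ht hta
      _ = C * expSqrtRpow (-a / 2) t := by rw [expSqrtRpow]; ring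
  rcases le_total t (a ^ 2) with hta | hta
  · exact small t ht hta
  · have ha₂ : -1 < a ^ 2 := by nlinarith
    rw [← integral_add_adjacent_intervals (b := a ^ 2)
      (intervalIntegrable_expSqrtRpow _ (by norm_num) ha₂)
      (intervalIntegrable_expSqrtRpow _ ha₂ (by linarith))]
    linarith [small (a ^ 2) (sq_nonneg a) le_rfl, integral_expSqrtRpow_le_sub hC le_rfl hta]

theorem stmt_2_general (α : ℕ) :
    ∃ C > (0:ℝ), ∀ t : ℝ, 0 ≤ t →
      (∫ s in (0:ℝ)..t,
          Real.exp (-2 * (Real.sqrt (1 + t) - Real.sqrt (1 + s))) *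
            (1 + s) ^ (-(1 + (α : ℝ)) / 2)) ≤
        C * (1 + t) ^ (-(α : ℝ) / 2) := by
  refine ⟨2 + (α : ℝ) ^ 2 * (1 + (α : ℝ) ^ 2) ^ ((α : ℝ) / 2), by positivity, fun t ht => ?_⟩
  have hfactor : ∀ s, exp (-2 * (√(1 + t) - √(1 + s))) * (1 + s) ^ (-(1 + (α : ℝ)) / 2) =
      exp (-(2 * √(1 + t))) * expSqrtRpow (-(1 + α) / 2) s := fun s => by
    rw [expSqrtRpow, ← mul_assoc, ← exp_add]
    ring_nf
  simp_rw [hfactor, integral_const_mul]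
  calc exp (-(2 * √(1 + t))) * ∫ s in (0 : ℝ)..t, expSqrtRpow (-(1 + α) / 2) s
      ≤ exp (-(2 * √(1 + t))) * ((2 + (α : ℝ) ^ 2 * (1 + (α : ℝ) ^ 2) ^ ((α : ℝ) / 2)) *
          expSqrtRpow (-α / 2) t) := by
        gcongr; exact integral_expSqrtRpow_le_mul (Nat.cast_nonneg α) ht
    _ = _ := by
        rw [expSqrtRpow, mul_left_comm, ← mul_assoc (exp _), ← exp_add]
        simp

/-- Calculus lemma: for every natural `α ≥ 1` there is `C > 0` such that for all `t ≥ 0`,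
`∫₀ᵗ e^{−2(√(1+t) − √(1+s))} (1+s)^{−(1+α)/2} ds ≤ C (1+t)^{−α/2}`. -/
theorem stmt_2 (α : ℕ) (hα : 1 ≤ α) :
    ∃ C > (0:ℝ), ∀ t : ℝ, 0 ≤ t →
      (∫ s in (0:ℝ)..t,
          Real.exp (-2 * (Real.sqrt (1 + t) - Real.sqrt (1 + s))) *
            (1 + s) ^ (-(1 + (α : ℝ)) / 2)) ≤
        C * (1 + t) ^ (-(α : ℝ) / 2) :=
  stmt_2_general α
end

section
/- Let (a_{p,q})_{(p,q)∈ℤ×ℕ} be a square-summable family of complex numbers, let α ∈ ℕ, and let N > 0. Then ∑_{p,q} p²/(p² + (qπ/2)²) |a_{p,q}|² ≥ (1/N) ∑_{p,q} |a_{p,q}|² − (1/N^{1+α}) ∑_{p,q} (p² + (qπ/2)²)^α |a_{p,q}|², provided a_{0,q} = 0 for all q. -/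
/-!
The inequality holds termwise. With `M = p² + (qπ/2)²`, either `M ≤ N`, and then
`1/N ≤ 1/M ≤ p²/M` because `p² ≥ 1` for `p ≠ 0`; or `M > N`, and then
`1/N ≤ M^α / N^(1+α)`.
-/

open scoped ENNReal

lemma one_le_sq_intCast_of_ne_zero {p : ℤ} (hp : p ≠ 0) : (1 : ℝ) ≤ (p : ℝ) ^ 2 := by
  exact_mod_cast (one_le_sq_iff_one_le_abs p).2 (Int.one_le_abs hp)

lemma one_div_le_div_add_pow_div {r M N : ℝ} (α : ℕ) (hN : 0 < N) (hr : 1 ≤ r) (hrM : r ≤ M) :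
    1 / N ≤ r / M + M ^ α / N ^ (1 + α) := by
  have hM : 0 < M := by linarith
  rcases le_or_gt M N with hMN | hNM
  · have : 1 / N ≤ r / M := by
      rw [div_le_div_iff₀ hN hM]
      nlinarith
    have : 0 ≤ M ^ α / N ^ (1 + α) := by positivity
    linarith
  · have : 1 / N ≤ M ^ α / N ^ (1 + α) := by
      rw [pow_add, pow_one, div_le_div_iff₀ hN (by positivity), one_mul, mul_comm]
      exact mul_le_mul_of_nonneg_right (pow_le_pow_left₀ hN.le hNM.le α) hN.le
    have : 0 ≤ r / M := by positivity
    linarith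

lemma ENNReal.ofReal_mul_le_add_ofReal_mul {c w d v x : ℝ} (hw : 0 ≤ w) (hd : 0 ≤ d)
    (hv : 0 ≤ v) (hx : 0 ≤ x) (h : c ≤ w + d * v) :
    ENNReal.ofReal c * ENNReal.ofReal x ≤
      ENNReal.ofReal (w * x) + ENNReal.ofReal d * ENNReal.ofReal (v * x) := by
  rw [← ENNReal.ofReal_mul' hx, ← ENNReal.ofReal_mul hd, ← ENNReal.ofReal_add (by positivity)
    (by positivity)]
  exact ENNReal.ofReal_le_ofReal (by nlinarith)

theorem stmt_7_general (a : ℤ × ℕ → ℂ)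
    (α : ℕ) (N : ℝ) (hN : 0 < N)
    (h0 : ∀ q : ℕ, a (0, q) = 0) :
    ENNReal.ofReal (1 / N) * ∑' pq : ℤ × ℕ, ENNReal.ofReal (‖a pq‖ ^ 2) ≤
      (∑' pq : ℤ × ℕ,
          ENNReal.ofReal
            ((pq.1 : ℝ) ^ 2 / ((pq.1 : ℝ) ^ 2 + ((pq.2 : ℝ) * Real.pi / 2) ^ 2) *
              ‖a pq‖ ^ 2)) +
        ENNReal.ofReal (1 / N ^ (1 + α)) *
          ∑' pq : ℤ × ℕ,
            ENNReal.ofReal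
              (((pq.1 : ℝ) ^ 2 + ((pq.2 : ℝ) * Real.pi / 2) ^ 2) ^ α * ‖a pq‖ ^ 2) := by
  rw [← ENNReal.tsum_mul_left, ← ENNReal.tsum_mul_left, ← ENNReal.tsum_add]
  refine ENNReal.tsum_le_tsum fun ⟨p, q⟩ => ?_
  rcases eq_or_ne p 0 with rfl | hp
  · simp [h0 q]
  have hp2 := one_le_sq_intCast_of_ne_zero hp
  have hM : (p : ℝ) ^ 2 ≤ (p : ℝ) ^ 2 + ((q : ℝ) * Real.pi / 2) ^ 2 :=
    le_add_of_nonneg_right (sq_nonneg _)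
  refine ENNReal.ofReal_mul_le_add_ofReal_mul (by positivity) (by positivity) (by positivity)
    (sq_nonneg _) ?_
  rw [one_div_mul_eq_div]
  exact one_div_le_div_add_pow_div α hN hp2 hM

/-- Fourier-side lower bound (Lemma 6.3): for a square-summable family
`(a_{p,q})_{(p,q) ∈ ℤ×ℕ}` with `a_{0,q} = 0`, `α ∈ ℕ` and `N > 0`,
`∑ p²/(p²+(qπ/2)²)|a_{p,q}|² ≥ (1/N)∑|a_{p,q}|² − (1/N^{1+α})∑(p²+(qπ/2)²)^α |a_{p,q}|²`.
(The inequality is stated in `ℝ≥0∞` with the subtracted term moved to the other side,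
so that the possibly infinite right-hand sums are allowed.) -/
theorem stmt_7 (a : ℤ × ℕ → ℂ)
    (hsum : Summable fun pq : ℤ × ℕ => ‖a pq‖ ^ 2)
    (α : ℕ) (N : ℝ) (hN : 0 < N)
    (h0 : ∀ q : ℕ, a (0, q) = 0) :
    ENNReal.ofReal (1 / N) * ∑' pq : ℤ × ℕ, ENNReal.ofReal (‖a pq‖ ^ 2) ≤
      (∑' pq : ℤ × ℕ,
          ENNReal.ofReal
            ((pq.1 : ℝ) ^ 2 / ((pq.1 : ℝ) ^ 2 + ((pq.2 : ℝ) * Real.pi / 2) ^ 2) *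
              ‖a pq‖ ^ 2)) +
        ENNReal.ofReal (1 / N ^ (1 + α)) *
          ∑' pq : ℤ × ℕ,
            ENNReal.ofReal
              (((pq.1 : ℝ) ^ 2 + ((pq.2 : ℝ) * Real.pi / 2) ^ 2) ^ α * ‖a pq‖ ^ 2) :=
  stmt_7_general a α N hN h0
end

section
/- Let f : [0,∞) → [0,∞) be continuous, γ > 0, and C, ε > 0 with constants such that f(t) ≤ Cε(1+t)^{−γ/4} + Cε ∫₀ᵗ (1+(t−s))^{−γ/4} f(s) ds for all t ∈ [0,T], with γ > 4. If moreover ε is sufficiently small (depending only on C and γ), then f(t) ≤ 3Cε(1+t)^{−γ/4} for all t ∈ [0,T]. -/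
/-!
Write `δ = γ/4` and `w(t) = (1+t)^{-δ}`. Since `δ > 1`, the kernel `w` is integrable on `[0,∞)`
and satisfies the convolution estimate `∫₀ᵗ w(t-s) w(s) ds ≤ K_δ w(t)`: on each half of `[0,t]`
one of the two factors is at most `w(t/2) ≤ 2^δ w(t)`. Hence the a-priori bound `f ≤ 3Cε w` on
`[0,t)` improves to `f(t) ≤ Cε w(t) + 3C²ε²K_δ w(t) ≤ 2Cε w(t)` once `3CεK_δ ≤ 1`. A bound that
can always be improved strictly at the first time it could fail holds everywhere, by continuity.
-/

open Set MeasureTheory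

lemma integral_one_add_rpow_neg_le {δ t : ℝ} (hδ : 1 < δ) (ht : 0 ≤ t) :
    ∫ s in (0:ℝ)..t, (1 + s) ^ (-δ) ≤ 1 / (δ - 1) := by
  have hshift : ∫ s in (0:ℝ)..t, (1 + s) ^ (-δ) = ∫ u in (1:ℝ)..(t + 1), u ^ (-δ) := by
    simpa [add_comm] using
      intervalIntegral.integral_comp_add_right (a := 0) (b := t) (fun u : ℝ => u ^ (-δ)) 1
  have hzero : (0:ℝ) ∉ uIcc 1 (t + 1) := by
    rw [uIcc_of_le (by linarith)]
    exact fun h => by linarith [h.1]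
  rw [hshift, integral_rpow (Or.inr ⟨by linarith, hzero⟩), Real.one_rpow,
    show -δ + 1 = -(δ - 1) by ring, div_neg, ← neg_div, neg_sub]
  have : 0 ≤ (t + 1) ^ (-(δ - 1)) := Real.rpow_nonneg (by linarith) _
  gcongr
  linarith

lemma integral_one_add_sub_rpow_neg (δ t : ℝ) :
    ∫ s in (0:ℝ)..t, (1 + (t - s)) ^ (-δ) = ∫ s in (0:ℝ)..t, (1 + s) ^ (-δ) := by
  simpa using intervalIntegral.integral_comp_sub_left (a := 0) (b := t)
    (fun u : ℝ => (1 + u) ^ (-δ)) t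

lemma continuousOn_one_add_rpow (r t : ℝ) :
    ContinuousOn (fun s : ℝ => (1 + s) ^ r) (Icc 0 t) :=
  ContinuousOn.rpow_const (by fun_prop) fun s hs => Or.inl (by linarith [hs.1])

lemma continuousOn_one_add_sub_rpow (r t : ℝ) :
    ContinuousOn (fun s : ℝ => (1 + (t - s)) ^ r) (Icc 0 t) :=
  ContinuousOn.rpow_const (by fun_prop) fun s hs => Or.inl (by linarith [hs.2])

lemma one_add_sub_rpow_neg_mul_le {δ t s : ℝ} (hδ : 0 ≤ δ) (hs : s ∈ Icc 0 t) :
    (1 + (t - s)) ^ (-δ) * (1 + s) ^ (-δ) ≤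
      2 ^ δ * (1 + t) ^ (-δ) * ((1 + s) ^ (-δ) + (1 + (t - s)) ^ (-δ)) := by
  obtain ⟨hs0, hst⟩ := hs
  have hhalf : ((1 + t) / 2) ^ (-δ) = 2 ^ δ * (1 + t) ^ (-δ) := by
    rw [Real.div_rpow (by linarith) zero_le_two, Real.rpow_neg zero_le_two]
    field_simp
  have hleft : 0 ≤ (1 + s) ^ (-δ) := Real.rpow_nonneg (by linarith) _
  have hright : 0 ≤ (1 + (t - s)) ^ (-δ) := Real.rpow_nonneg (by linarith) _
  rcases le_total (2 * s) t with h | h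
  · have := Real.rpow_le_rpow_of_nonpos (by linarith) (show (1 + t) / 2 ≤ 1 + (t - s) by linarith)
      (neg_nonpos.mpr hδ)
    rw [hhalf] at this
    nlinarith
  · have := Real.rpow_le_rpow_of_nonpos (by linarith) (show (1 + t) / 2 ≤ 1 + s by linarith)
      (neg_nonpos.mpr hδ)
    rw [hhalf] at this
    nlinarith

lemma integral_one_add_sub_rpow_neg_mul_le {δ t : ℝ} (hδ : 1 < δ) (ht : 0 ≤ t) :
    ∫ s in (0:ℝ)..t, (1 + (t - s)) ^ (-δ) * (1 + s) ^ (-δ) ≤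
      2 ^ δ * (2 / (δ - 1)) * (1 + t) ^ (-δ) := by
  have hleft := (continuousOn_one_add_rpow (-δ) t).intervalIntegrable_of_Icc (μ := volume) ht
  have hright :=
    (continuousOn_one_add_sub_rpow (-δ) t).intervalIntegrable_of_Icc (μ := volume) ht
  have hprod := ((continuousOn_one_add_sub_rpow (-δ) t).mul
    (continuousOn_one_add_rpow (-δ) t)).intervalIntegrable_of_Icc (μ := volume) ht
  calc ∫ s in (0:ℝ)..t, (1 + (t - s)) ^ (-δ) * (1 + s) ^ (-δ)
      ≤ ∫ s in (0:ℝ)..t, 2 ^ δ * (1 + t) ^ (-δ) * ((1 + s) ^ (-δ) + (1 + (t - s)) ^ (-δ)) :=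
        intervalIntegral.integral_mono_on ht hprod ((hleft.add hright).const_mul _)
          fun s hs => one_add_sub_rpow_neg_mul_le (by linarith) hs
    _ = 2 ^ δ * (1 + t) ^ (-δ) * (2 * ∫ s in (0:ℝ)..t, (1 + s) ^ (-δ)) := by
        rw [intervalIntegral.integral_const_mul, intervalIntegral.integral_add hleft hright,
          integral_one_add_sub_rpow_neg, two_mul]
    _ ≤ 2 ^ δ * (1 + t) ^ (-δ) * (2 * (1 / (δ - 1))) := by
        gcongr
        exact integral_one_add_rpow_neg_le hδ ht
    _ = 2 ^ δ * (2 / (δ - 1)) * (1 + t) ^ (-δ) := by ring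

lemma integral_one_add_sub_rpow_neg_mul_le_of_le {δ t A : ℝ} {f : ℝ → ℝ} (hδ : 1 < δ)
    (ht : 0 ≤ t) (hA : 0 ≤ A) (hf : ContinuousOn f (Icc 0 t))
    (hfA : ∀ s ∈ Ioo 0 t, f s ≤ A * (1 + s) ^ (-δ)) :
    ∫ s in (0:ℝ)..t, (1 + (t - s)) ^ (-δ) * f s ≤
      A * (2 ^ δ * (2 / (δ - 1)) * (1 + t) ^ (-δ)) := by
  have hkernel := continuousOn_one_add_sub_rpow (-δ) t
  calc ∫ s in (0:ℝ)..t, (1 + (t - s)) ^ (-δ) * f s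
      ≤ ∫ s in (0:ℝ)..t, A * ((1 + (t - s)) ^ (-δ) * (1 + s) ^ (-δ)) := by
        refine intervalIntegral.integral_mono_on_of_le_Ioo ht
          ((hkernel.mul hf).intervalIntegrable_of_Icc ht)
          (((hkernel.mul (continuousOn_one_add_rpow (-δ) t)).const_smul A).intervalIntegrable_of_Icc
            ht) fun s hs => ?_
        rw [mul_left_comm]
        exact mul_le_mul_of_nonneg_left (hfA s hs) (Real.rpow_nonneg (by linarith [hs.2]) _)
    _ ≤ A * (2 ^ δ * (2 / (δ - 1)) * (1 + t) ^ (-δ)) := by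
        rw [intervalIntegral.integral_const_mul]
        exact mul_le_mul_of_nonneg_left (integral_one_add_sub_rpow_neg_mul_le hδ ht) hA

lemma lt_on_Icc_of_forall_le_on_Ico_imp_lt {α β : Type*} [ConditionallyCompleteLinearOrder α]
    [TopologicalSpace α] [OrderTopology α] [LinearOrder β] [TopologicalSpace β]
    [OrderClosedTopology β] {a b : α} {f g : α → β}
    (hf : ContinuousOn f (Icc a b)) (hg : ContinuousOn g (Icc a b))
    (hstep : ∀ t ∈ Icc a b, (∀ s ∈ Ico a t, f s ≤ g s) → f t < g t) :
    ∀ t ∈ Icc a b, f t < g t := by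
  by_contra! hbad
  have hclosed : IsClosed {x ∈ Icc a b | g x ≤ f x} := isClosed_Icc.isClosed_le hg hf
  obtain ⟨t₁, ⟨ht₁, hle⟩, hleast⟩ :=
    (isCompact_Icc.of_isClosed_subset hclosed (sep_subset _ _)).exists_isLeast hbad
  refine (hstep t₁ ht₁ fun s hs => ?_).not_ge hle
  by_contra! hlt
  exact (hleast ⟨⟨hs.1, hs.2.le.trans ht₁.2⟩, hlt.le⟩).not_gt hs.2

/-- Bootstrap/continuity argument closing the decay estimate (Lemma 7.4): if
`f(t) ≤ Cε(1+t)^{−γ/4} + Cε ∫₀ᵗ (1+(t−s))^{−γ/4} f(s) ds` on `[0,T]` with `γ > 4` and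
`ε` sufficiently small (depending only on `C` and `γ`), then
`f(t) ≤ 3Cε(1+t)^{−γ/4}` on `[0,T]`. -/
theorem stmt_9 (C γ : ℝ) (hC : 0 < C) (hγ : 4 < γ) :
    ∃ ε₀ > (0:ℝ), ∀ ε : ℝ, 0 < ε → ε ≤ ε₀ →
      ∀ T : ℝ, 0 ≤ T → ∀ f : ℝ → ℝ,
        ContinuousOn f (Icc 0 T) → (∀ t ∈ Icc (0:ℝ) T, 0 ≤ f t) →
        (∀ t ∈ Icc (0:ℝ) T,
          f t ≤ C * ε * (1 + t) ^ (-γ / 4) +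
            C * ε * ∫ s in (0:ℝ)..t, (1 + (t - s)) ^ (-γ / 4) * f s) →
        ∀ t ∈ Icc (0:ℝ) T, f t ≤ 3 * C * ε * (1 + t) ^ (-γ / 4) := by
  obtain ⟨δ, rfl⟩ : ∃ δ, γ = 4 * δ := ⟨γ / 4, by ring⟩
  have hδ : 1 < δ := by linarith
  have hexp : -(4 * δ) / 4 = -δ := by ring
  set K := 2 ^ δ * (2 / (δ - 1))
  have hK : 0 < K := by
    have : 0 < δ - 1 := by linarith
    positivity
  refine ⟨1 / (3 * C * K), by positivity, fun ε hε hεε₀ T _ f hf _ hbound => ?_⟩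
  have hsmall : 3 * C * ε * K ≤ 1 := by
    rw [le_div_iff₀ (by positivity)] at hεε₀
    linarith
  simp only [hexp] at hbound ⊢
  refine fun t ht => (lt_on_Icc_of_forall_le_on_Ico_imp_lt hf
    (continuousOn_const.mul (continuousOn_one_add_rpow (-δ) T)) (fun t ht hprev => ?_) t ht).le
  have hw : 0 < C * ε * (1 + t) ^ (-δ) := by have := ht.1; positivity
  have hint := integral_one_add_sub_rpow_neg_mul_le_of_le hδ ht.1 (by positivity)
    (hf.mono (Icc_subset_Icc le_rfl ht.2)) fun s hs => hprev s ⟨hs.1.le, hs.2⟩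
  calc f t ≤ C * ε * (1 + t) ^ (-δ) + C * ε * ∫ s in (0:ℝ)..t, (1 + (t - s)) ^ (-δ) * f s :=
        hbound t ht
    _ ≤ C * ε * (1 + t) ^ (-δ) + C * ε * (3 * C * ε * (K * (1 + t) ^ (-δ))) := by gcongr
    _ = C * ε * (1 + t) ^ (-δ) + 3 * C * ε * K * (C * ε * (1 + t) ^ (-δ)) := by ring
    _ ≤ C * ε * (1 + t) ^ (-δ) + 1 * (C * ε * (1 + t) ^ (-δ)) := by gcongr
    _ < 3 * C * ε * (1 + t) ^ (-δ) := by linarith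
end
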